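/- Let F ∈ ℂ[x₀,…,xₙ] be homogeneous of degree d and let l₁,…,l_r ∈ ℂ[x₀,…,xₙ] be nonzero linear forms that are pairwise non-proportional, with l_i = a_{i0}x₀ + ⋯ + a_{in}xₙ. Let I_Γ ⊆ ℂ[y₀,…,yₙ] be the homogeneous ideal of all polynomials vanishing at every point (a_{i0},…,a_{in}) ∈ ℂ^{n+1} (equivalently, the homogeneous vanishing ideal of the points [l_i] in projective space). Then F is a ℂ-linear combination of l₁^d,…,l_r^d if and only if I_Γ ⊆ F^⊥. -/

import Mathlib

/-!
Differentiating a power of a linear form `l = ∑ aₖ xₖ` by a form `D` of degree `e` gives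
`d (d - 1) ⋯ (d - e + 1) · D(a) · l ^ (d - e)`, so every element of `I_Γ` annihilates
`∑ cᵢ lᵢ ^ d`. Conversely, the pairing `⟨D, F⟩ = D(F) ∈ ℂ` between forms of degree `d` is
perfect: distinct monomials are orthogonal and `⟨x^α, x^α⟩ = α!`. If `I_Γ ⊆ F^⊥`, the functional
`⟨·, F⟩` on forms of degree `d` vanishes on the common kernel of the evaluations at the `aᵢ`, so it
is a combination `∑ cᵢ D(aᵢ)`. As `⟨D, lᵢ ^ d⟩ = d! D(aᵢ)`, the forms `F` and `∑ (cᵢ / d!) lᵢ ^ d`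
pair equally with everything, hence coincide.
-/

open MvPolynomial

noncomputable def diffOpMonomial {m : ℕ} (α : Fin m →₀ ℕ) :
    MvPolynomial (Fin m) ℂ →ₗ[ℂ] MvPolynomial (Fin m) ℂ :=
  ((List.finRange m).map fun i =>
    ((pderiv (R := ℂ) i).toLinearMap) ^ (α i)).prod

noncomputable def diffAct {m : ℕ} :
    MvPolynomial (Fin m) ℂ →ₗ[ℂ] (MvPolynomial (Fin m) ℂ →ₗ[ℂ] MvPolynomial (Fin m) ℂ) :=
  (MvPolynomial.basisMonomials (Fin m) ℂ).constr ℂ diffOpMonomial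

noncomputable def DiffSpan {m : ℕ} (f : MvPolynomial (Fin m) ℂ) :
    Submodule ℂ (MvPolynomial (Fin m) ℂ) :=
  Submodule.span ℂ (Set.range fun α : Fin m →₀ ℕ => diffOpMonomial α f)

/-- The annihilator `f^⊥` of a polynomial `f`, as a `ℂ`-subspace of the ring of
differential operators (it is in fact an ideal). -/
noncomputable def perp {m : ℕ} (f : MvPolynomial (Fin m) ℂ) :
    Submodule ℂ (MvPolynomial (Fin m) ℂ) :=
  LinearMap.ker (diffAct.flip f)

/-- An ideal `I` is apolar to `F` if `I ⊆ F^⊥`, i.e. every `D ∈ I` annihilates `F`. -/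
def IsApolarTo {m : ℕ} (I : Ideal (MvPolynomial (Fin m) ℂ))
    (F : MvPolynomial (Fin m) ℂ) : Prop :=
  ∀ D ∈ I, diffAct D F = 0

/-- A homogeneous ideal is saturated (with respect to the irrelevant maximal ideal). -/
def IsSaturatedIdeal {m : ℕ} (I : Ideal (MvPolynomial (Fin m) ℂ)) : Prop :=
  ∀ g : MvPolynomial (Fin m) ℂ, (∀ i : Fin m, X i * g ∈ I) → g ∈ I

/-- The Hilbert function of `T/I` in degree `e`: `dim_ℂ (T/I)_e = dim T_e − dim I_e`. -/
noncomputable def hilb {m : ℕ} (I : Ideal (MvPolynomial (Fin m) ℂ)) (e : ℕ) : ℕ :=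
  Module.finrank ℂ (homogeneousSubmodule (Fin m) ℂ e) -
    Module.finrank ℂ
      (Submodule.restrictScalars ℂ I ⊓ homogeneousSubmodule (Fin m) ℂ e :
        Submodule ℂ (MvPolynomial (Fin m) ℂ))

/-- `I` defines a zero-dimensional subscheme of length `r`: it is homogeneous,
saturated, and `dim_ℂ (T/I)_e = r` for all sufficiently large `e`. -/
def DefinesLength {m : ℕ} (I : Ideal (MvPolynomial (Fin m) ℂ)) (r : ℕ) : Prop :=
  (∀ g ∈ I, ∀ j : ℕ, homogeneousComponent j g ∈ I) ∧
  IsSaturatedIdeal I ∧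
  ∃ e₀ : ℕ, ∀ e ≥ e₀, hilb I e = r

/-- The cactus rank of `F`: the minimal length of an apolar zero-dimensional subscheme. -/
noncomputable def cactusRank {m : ℕ} (F : MvPolynomial (Fin m) ℂ) : ℕ :=
  sInf {r : ℕ | ∃ I : Ideal (MvPolynomial (Fin m) ℂ), IsApolarTo I F ∧ DefinesLength I r}

/-- Dehomogenization with respect to `x₀`: `f = F(1, x₁, …, xₙ)`. -/
noncomputable def dehom {n : ℕ} (F : MvPolynomial (Fin (n + 1)) ℂ) :
    MvPolynomial (Fin n) ℂ :=
  aeval (fun i : Fin (n + 1) =>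
    Fin.cases (motive := fun _ => MvPolynomial (Fin n) ℂ) 1 (fun j => X j) i) F

/-- Homogenization with respect to a new variable `y₀`. -/
noncomputable def homogenize {n : ℕ} (g : MvPolynomial (Fin n) ℂ) :
    MvPolynomial (Fin (n + 1)) ℂ :=
  ∑ j ∈ Finset.range (g.totalDegree + 1),
    (X 0 : MvPolynomial (Fin (n + 1)) ℂ) ^ (g.totalDegree - j) *
      rename Fin.succ (homogeneousComponent j g)

/-- `N_d`: `2·C(n+k,k)` if `d = 2k+1`, and `C(n+k,k) + C(n+k+1,k+1)` if `d = 2k+2`. -/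
def Nd (n d : ℕ) : ℕ :=
  if d % 2 = 1 then 2 * Nat.choose (n + d / 2) (d / 2)
  else Nat.choose (n + d / 2 - 1) (d / 2 - 1) + Nat.choose (n + d / 2) (d / 2)

section PDeriv

variable {σ R : Type*} [CommSemiring R]

theorem pderiv_pow_apply_monomial (i : σ) (k : ℕ) (β : σ →₀ ℕ) (c : R) :
    ((pderiv i).toLinearMap ^ k) (monomial β c) =
      monomial (β - Finsupp.single i k) (c * ((β i).descFactorial k : R)) := by
  induction k with
  | zero => simp
  | succ k ih =>
    rw [pow_succ', Module.End.mul_apply, ih, Derivation.coeFn_coe, pderiv_monomial,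
      tsub_tsub, ← Finsupp.single_add, Finsupp.tsub_apply, Finsupp.single_eq_same,
      Nat.descFactorial_succ]
    push_cast
    ring_nf

theorem listProd_pderiv_pow_apply_monomial (α : σ →₀ ℕ) (L : List σ) (hL : L.Nodup)
    (β : σ →₀ ℕ) (c : R) :
    (L.map fun i => (pderiv i).toLinearMap ^ α i).prod (monomial β c) =
      monomial (β - (L.map fun i => Finsupp.single i (α i)).sum)
        (c * (L.map fun i => ((β i).descFactorial (α i) : R)).prod) := by
  induction L with
  | nil => simp
  | cons i L ih =>
    obtain ⟨hi, hL⟩ := List.nodup_cons.mp hL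
    have hLi : (L.map fun j => Finsupp.single j (α j)).sum i = 0 := by
      rw [← Finsupp.applyAddHom_apply, map_list_sum, List.map_map]
      exact List.sum_eq_zero fun x hx => by
        obtain ⟨j, hj, rfl⟩ := List.mem_map.mp hx
        exact Finsupp.single_eq_of_ne (by rintro rfl; exact hi hj)
    simp only [List.map_cons, List.prod_cons, List.sum_cons, Module.End.mul_apply]
    rw [ih hL, pderiv_pow_apply_monomial, Finsupp.tsub_apply, hLi, Nat.sub_zero, tsub_tsub,
      add_comm]
    ring_nf

variable [Fintype σ]

noncomputable def linearForm (a : σ → R) : MvPolynomial σ R :=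
  ∑ k, C (a k) * X k

theorem isHomogeneous_linearForm (a : σ → R) : (linearForm a).IsHomogeneous 1 :=
  IsHomogeneous.sum _ _ _ fun k _ => isHomogeneous_C_mul_X (a k) k

theorem pderiv_linearForm [DecidableEq σ] (a : σ → R) (i : σ) :
    pderiv i (linearForm a) = C (a i) := by
  simp [linearForm, pderiv_X, Pi.single_apply]

theorem pderiv_linearForm_pow [DecidableEq σ] (a : σ → R) (i : σ) (p : ℕ) :
    pderiv i (linearForm a ^ p) = ((p : R) * a i) • linearForm a ^ (p - 1) := by
  rw [Derivation.leibniz_pow, pderiv_linearForm, smul_eq_mul, nsmul_eq_mul, smul_eq_C_mul,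
    map_mul, map_natCast]
  ring

theorem pderiv_pow_apply_linearForm_pow [DecidableEq σ] (a : σ → R) (i : σ) (k p : ℕ) :
    ((pderiv i).toLinearMap ^ k) (linearForm a ^ p) =
      ((p.descFactorial k : R) * a i ^ k) • linearForm a ^ (p - k) := by
  induction k with
  | zero => simp
  | succ k ih =>
    rw [pow_succ', Module.End.mul_apply, ih, LinearMap.map_smul, Derivation.coeFn_coe,
      pderiv_linearForm_pow, smul_smul, Nat.descFactorial_succ, Nat.sub_sub]
    push_cast
    ring_nf

theorem listProd_pderiv_pow_apply_linearForm_pow [DecidableEq σ] (a : σ → R) (α : σ →₀ ℕ)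
    (L : List σ) (p : ℕ) :
    (L.map fun i => (pderiv i).toLinearMap ^ α i).prod (linearForm a ^ p) =
      ((p.descFactorial (L.map α).sum : R) * (L.map fun i => a i ^ α i).prod) •
        linearForm a ^ (p - (L.map α).sum) := by
  induction L with
  | nil => simp
  | cons i L ih =>
    simp only [List.map_cons, List.prod_cons, List.sum_cons, Module.End.mul_apply]
    rw [ih, LinearMap.map_smul, pderiv_pow_apply_linearForm_pow, smul_smul, Nat.sub_sub, add_comm,
      ← Nat.descFactorial_mul_descFactorial (Nat.le_add_left _ (α i)), Nat.add_sub_cancel]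
    push_cast
    ring_nf

end PDeriv

section DiffAct

variable {m : ℕ}

theorem diffOpMonomial_monomial (α β : Fin m →₀ ℕ) (c : ℂ) :
    diffOpMonomial α (monomial β c) =
      monomial (β - α) (c * ∏ i, ((β i).descFactorial (α i) : ℂ)) := by
  rw [diffOpMonomial, listProd_pderiv_pow_apply_monomial α _ (List.nodup_finRange m),
    ← Fin.sum_univ_def, ← Fin.prod_univ_def, Finsupp.univ_sum_single]

theorem diffOpMonomial_linearForm_pow (a : Fin m → ℂ) (α : Fin m →₀ ℕ) (p : ℕ) :
    diffOpMonomial α (linearForm a ^ p) =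
      ((p.descFactorial α.degree : ℂ) * ∏ i, a i ^ α i) • linearForm a ^ (p - α.degree) := by
  rw [diffOpMonomial, listProd_pderiv_pow_apply_linearForm_pow, Finsupp.degree_eq_sum,
    ← Fin.sum_univ_def, ← Fin.prod_univ_def]

theorem diffAct_monomial (α : Fin m →₀ ℕ) (c : ℂ) :
    diffAct (monomial α c) = c • diffOpMonomial α := by
  have h : monomial α c = c • basisMonomials (Fin m) ℂ α := by
    rw [coe_basisMonomials, smul_monomial, smul_eq_mul, mul_one]
  rw [h, map_smul, diffAct, Module.Basis.constr_basis]

theorem diffOpMonomial_add (α β : Fin m →₀ ℕ) :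
    diffOpMonomial (α + β) = diffOpMonomial α * diffOpMonomial β := by
  refine (basisMonomials (Fin m) ℂ).ext fun γ => ?_
  rw [coe_basisMonomials, Module.End.mul_apply, diffOpMonomial_monomial, diffOpMonomial_monomial,
    diffOpMonomial_monomial, tsub_tsub, add_comm β α, one_mul, one_mul,
    ← Finset.prod_mul_distrib]
  congr 2 with i
  rw [Finsupp.tsub_apply, Finsupp.add_apply, ← Nat.cast_mul,
    ← Nat.descFactorial_mul_descFactorial (Nat.le_add_left (β i) (α i)), Nat.add_sub_cancel,
    mul_comm]

theorem diffAct_mul (P Q : MvPolynomial (Fin m) ℂ) :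
    diffAct (P * Q) = diffAct P * diffAct Q := by
  induction P using MvPolynomial.induction_on' with
  | add P₁ P₂ ih₁ ih₂ => rw [add_mul, map_add, map_add, ih₁, ih₂, add_mul]
  | monomial α c =>
    induction Q using MvPolynomial.induction_on' with
    | add Q₁ Q₂ ih₁ ih₂ => rw [mul_add, map_add, map_add, ih₁, ih₂, mul_add]
    | monomial β b =>
      rw [monomial_mul, diffAct_monomial, diffAct_monomial, diffAct_monomial,
        diffOpMonomial_add, smul_mul_smul_comm]

end DiffAct

section Apolarity

variable {m : ℕ}

theorem diffAct_linearForm_pow (a : Fin m → ℂ) {D : MvPolynomial (Fin m) ℂ} {e : ℕ}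
    (hD : D.IsHomogeneous e) (p : ℕ) :
    diffAct D (linearForm a ^ p) =
      ((p.descFactorial e : ℂ) * eval a D) • linearForm a ^ (p - e) := by
  have hterm : ∀ α ∈ D.support, diffAct (monomial α (coeff α D)) (linearForm a ^ p) =
      ((p.descFactorial e : ℂ) * (coeff α D * ∏ i, a i ^ α i)) • linearForm a ^ (p - e) := by
    intro α hα
    have hdeg : α.degree = e := by
      rw [Finsupp.degree_eq_weight_one]
      exact hD (mem_support_iff.mp hα)
    rw [diffAct_monomial, LinearMap.smul_apply, diffOpMonomial_linearForm_pow, hdeg, smul_smul,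
      mul_left_comm]
  conv_lhs => rw [D.as_sum]
  rw [map_sum, LinearMap.sum_apply, Finset.sum_congr rfl hterm, ← Finset.sum_smul,
    ← Finset.mul_sum, eval_eq']

theorem coeff_zero_diffOpMonomial (α : Fin m →₀ ℕ) (G : MvPolynomial (Fin m) ℂ) :
    coeff 0 (diffOpMonomial α G) = (∏ i, ((α i).factorial : ℂ)) * coeff α G := by
  induction G using MvPolynomial.induction_on' with
  | add G₁ G₂ ih₁ ih₂ => rw [map_add, coeff_add, coeff_add, ih₁, ih₂, mul_add]
  | monomial β c =>
    rw [diffOpMonomial_monomial, coeff_monomial, coeff_monomial]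
    by_cases hβ : β = α
    · subst hβ
      simp only [tsub_self, if_true, Nat.descFactorial_self, mul_comm]
    · rw [if_neg hβ, mul_zero, ite_eq_right_iff]
      intro hle
      obtain ⟨i, hi⟩ := (Finsupp.lt_def.mp (lt_of_le_of_ne (tsub_eq_zero_iff_le.mp hle) hβ)).2
      rw [Finset.prod_eq_zero (Finset.mem_univ i)
        (Nat.cast_eq_zero.mpr (Nat.descFactorial_eq_zero_iff_lt.mpr hi)), mul_zero]

theorem eq_of_forall_coeff_zero_diffAct_eq {F G : MvPolynomial (Fin m) ℂ} {d : ℕ}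
    (hF : F.IsHomogeneous d) (hG : G.IsHomogeneous d)
    (h : ∀ D : MvPolynomial (Fin m) ℂ, D.IsHomogeneous d →
      coeff 0 (diffAct D F) = coeff 0 (diffAct D G)) : F = G := by
  ext α
  by_cases hα : α.degree = d
  · have hα' := h (monomial α 1) (isHomogeneous_monomial 1 hα)
    rw [diffAct_monomial, one_smul, coeff_zero_diffOpMonomial, coeff_zero_diffOpMonomial] at hα'
    exact mul_left_cancel₀ (Finset.prod_ne_zero_iff.mpr fun i _ =>
      Nat.cast_ne_zero.mpr (Nat.factorial_ne_zero _)) hα'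
  · rw [hF.coeff_eq_zero hα, hG.coeff_eq_zero hα]

/-- `F^⊥` as an ideal; `perp F` is the same set as a `ℂ`-subspace. -/
noncomputable def apolarIdeal (F : MvPolynomial (Fin m) ℂ) : Ideal (MvPolynomial (Fin m) ℂ) where
  carrier := {D | diffAct D F = 0}
  add_mem' {D E} hD hE := by simp_all
  zero_mem' := by simp
  smul_mem' E D hD := by
    change diffAct (E * D) F = 0
    rw [diffAct_mul, Module.End.mul_apply, hD, map_zero]

variable {ι : Type*} [Fintype ι]

/-- The ideal `I_Γ` of the points `[a i]`. -/
noncomputable def homogeneousVanishingIdeal (a : ι → Fin m → ℂ) :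
    Ideal (MvPolynomial (Fin m) ℂ) :=
  Ideal.span {D | (∃ e : ℕ, D.IsHomogeneous e) ∧ ∀ i, eval (a i) D = 0}

theorem homogeneousVanishingIdeal_le_apolarIdeal (a : ι → Fin m → ℂ) (c : ι → ℂ) (d : ℕ) :
    homogeneousVanishingIdeal a ≤ apolarIdeal (∑ i, c i • linearForm (a i) ^ d) := by
  refine Ideal.span_le.mpr fun D ⟨⟨e, he⟩, hvan⟩ => ?_
  change diffAct D _ = 0
  simp only [map_sum, map_smul, diffAct_linearForm_pow _ he, hvan, mul_zero, zero_smul,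
    smul_zero, Finset.sum_const_zero]

theorem exists_coeff_zero_diffAct_eq_sum_eval {a : ι → Fin m → ℂ} {F : MvPolynomial (Fin m) ℂ}
    (H : homogeneousVanishingIdeal a ≤ apolarIdeal F) (d : ℕ) :
    ∃ c : ι → ℂ, ∀ D : MvPolynomial (Fin m) ℂ, D.IsHomogeneous d →
      coeff 0 (diffAct D F) = ∑ i, c i * eval (a i) D := by
  -- A form vanishing at the `a i` need not have components that do, so the functionals are
  -- taken on the degree-`d` component only.
  let L (i : ι) : MvPolynomial (Fin m) ℂ →ₗ[ℂ] ℂ :=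
    (aeval (a i)).toLinearMap ∘ₗ homogeneousComponent d
  let K : MvPolynomial (Fin m) ℂ →ₗ[ℂ] ℂ :=
    lcoeff ℂ 0 ∘ₗ diffAct.flip F ∘ₗ homogeneousComponent d
  have hker : ⨅ i, LinearMap.ker (L i) ≤ LinearMap.ker K := by
    intro D hD
    simp only [Submodule.mem_iInf, LinearMap.mem_ker] at hD
    have hmem : homogeneousComponent d D ∈ homogeneousVanishingIdeal a :=
      Ideal.subset_span ⟨⟨d, homogeneousComponent_isHomogeneous d D⟩,
        fun i => by simpa [L, coe_aeval_eq_eval] using hD i⟩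
    simp [K, show diffAct (homogeneousComponent d D) F = 0 from H hmem]
  obtain ⟨c, hc⟩ :=
    (Submodule.mem_span_range_iff_exists_fun ℂ).mp (mem_span_of_iInf_ker_le_ker hker)
  refine ⟨c, fun D hD => ?_⟩
  have hKD := LinearMap.congr_fun hc D
  simp only [LinearMap.coe_sum, LinearMap.coe_smul, LinearMap.coe_comp, AlgHom.coe_toLinearMap,
    aeval_eq_eval, Finset.sum_apply, Pi.smul_apply, Function.comp_apply, smul_eq_mul,
    LinearMap.flip_apply, lcoeff_apply, homogeneousComponent_eq_self hD, L, K] at hKD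
  exact hKD.symm

theorem isHomogeneous_sum_smul_linearForm_pow (a : ι → Fin m → ℂ) (c : ι → ℂ) (d : ℕ) :
    (∑ i, c i • linearForm (a i) ^ d).IsHomogeneous d := by
  refine (mem_homogeneousSubmodule d _).mp
    (Submodule.sum_mem _ fun i _ => Submodule.smul_mem _ _ ((mem_homogeneousSubmodule d _).mpr ?_))
  simpa using (isHomogeneous_linearForm (a i)).pow d

theorem exists_eq_sum_smul_linearForm_pow {a : ι → Fin m → ℂ} {F : MvPolynomial (Fin m) ℂ}
    {d : ℕ} (hF : F.IsHomogeneous d) (H : homogeneousVanishingIdeal a ≤ apolarIdeal F) :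
    ∃ c : ι → ℂ, F = ∑ i, c i • linearForm (a i) ^ d := by
  obtain ⟨c, hc⟩ := exists_coeff_zero_diffAct_eq_sum_eval H d
  refine ⟨fun i => c i / d.factorial,
    eq_of_forall_coeff_zero_diffAct_eq hF (isHomogeneous_sum_smul_linearForm_pow a _ d)
      fun D hD => ?_⟩
  rw [hc D hD, map_sum, coeff_sum]
  refine Finset.sum_congr rfl fun i _ => ?_
  rw [map_smul, diffAct_linearForm_pow _ hD, Nat.sub_self, pow_zero, Nat.descFactorial_self,
    smul_smul, coeff_smul, coeff_zero_one, smul_eq_mul, mul_one, div_mul_eq_mul_div,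
    mul_div_assoc, mul_div_cancel_left₀ _ (Nat.cast_ne_zero.mpr d.factorial_ne_zero)]

end Apolarity

theorem statement7_general {n d r : ℕ} (F : MvPolynomial (Fin (n + 1)) ℂ)
    (hF : F.IsHomogeneous d)
    (a : Fin r → Fin (n + 1) → ℂ) :
    (∃ c : Fin r → ℂ,
        F = ∑ i, c i • (∑ k : Fin (n + 1), MvPolynomial.C (a i k) * X k) ^ d) ↔
    ∀ D ∈ Ideal.span {D : MvPolynomial (Fin (n + 1)) ℂ |
        (∃ e : ℕ, D.IsHomogeneous e) ∧ ∀ i, eval (a i) D = 0},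
      diffAct D F = 0 := by
  constructor
  · rintro ⟨c, rfl⟩ D hD
    exact homogeneousVanishingIdeal_le_apolarIdeal a c d hD
  · exact fun H => exists_eq_sum_smul_linearForm_pow hF H

/-- apolarity lemma. For `F` homogeneous of degree `d` and pairwise
non-proportional nonzero linear forms `l_i` with coefficient vectors `a i`, `F` is a
linear combination of `l₁^d, …, l_r^d` iff the homogeneous vanishing ideal `I_Γ` of the
points `a i` is contained in `F^⊥`. -/
theorem statement7 {n d r : ℕ} (F : MvPolynomial (Fin (n + 1)) ℂ)
    (hF : F.IsHomogeneous d)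
    (a : Fin r → Fin (n + 1) → ℂ) (ha : ∀ i, a i ≠ 0)
    (hprop : ∀ i j, i ≠ j → ∀ c : ℂ, a i ≠ c • a j) :
    (∃ c : Fin r → ℂ,
        F = ∑ i, c i • (∑ k : Fin (n + 1), MvPolynomial.C (a i k) * X k) ^ d) ↔
    ∀ D ∈ Ideal.span {D : MvPolynomial (Fin (n + 1)) ℂ |
        (∃ e : ℕ, D.IsHomogeneous e) ∧ ∀ i, eval (a i) D = 0},
      diffAct D F = 0 :=
  statement7_general F hF a
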